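/- Hivert's operators π̃_i satisfy the braid relations π̃_i π̃_{i+1} π̃_i = π̃_{i+1} π̃_i π̃_{i+1} and the commutation relations π̃_i π̃_j = π̃_j π̃_i for |i−j| > 1. -/

import Mathlib

open MvPolynomial

/-- Hivert's quasisymmetric swap on exponent vectors: exchange the exponents in
positions `i` and `i+1` if one of them is zero, otherwise do nothing. -/
noncomputable def tswapE (n i : ℕ) (hi : i + 1 < n) (β : Fin n →₀ ℕ) : Fin n →₀ ℕ :=
  if β ⟨i, by omega⟩ = 0 ∨ β ⟨i + 1, hi⟩ = 0 then
    β.equivMapDomain (Equiv.swap (⟨i, by omega⟩ : Fin n) ⟨i + 1, hi⟩)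
  else β

/-- Hivert's quasisymmetric action `s̃ᵢ` on polynomials, acting monomial-wise by
`s̃ᵢ(x^β) = x^(s̃ᵢ β)` and extended linearly. -/
noncomputable def stilde (n i : ℕ) (hi : i + 1 < n) (f : MvPolynomial (Fin n) ℂ) :
    MvPolynomial (Fin n) ℂ :=
  f.support.sum fun β => monomial (tswapE n i hi β) (coeff β f)

/-- `PRel n i hi f g` encodes `π̃ᵢ f = g`, where
`π̃ᵢ f = (xᵢ f - s̃ᵢ(xᵢ f))/(xᵢ - xᵢ₊₁)`; the relation
`(xᵢ - xᵢ₊₁) * g = xᵢ f - s̃ᵢ(xᵢ f)` determines `g` uniquely. -/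
def PRel (n i : ℕ) (hi : i + 1 < n) (f g : MvPolynomial (Fin n) ℂ) : Prop :=
  (X ⟨i, by omega⟩ - X ⟨i + 1, hi⟩) * g
    = X ⟨i, by omega⟩ * f - stilde n i hi (X ⟨i, by omega⟩ * f)

/-!
On a monomial `x^β` with `β_{i+1} = 0`, `π̃ᵢ` replaces `x_i^a` by the complete homogeneous
polynomial `h_a(x_i, x_{i+1}) = ∑_{p+q=a} x_i^p x_{i+1}^q`; this is the quotient
`(x_i x^β - s̃ᵢ(x_i x^β)) / (x_i - x_{i+1})` by the geometric sum formula, because `s̃ᵢ` moves the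
whole exponent `a + 1` from `i` to `i+1`. On a monomial with `β_{i+1} ≠ 0` it vanishes, since
`s̃ᵢ` fixes `x_i x^β`. As `x_i - x_{i+1}` is a nonzerodivisor, the relation `PRel` forces its
output to be this linear operator. Operators at distant indices change disjoint exponents, so they
commute. For the braid relation, both sides kill `x^β` unless `β_{i+1} = β_{i+2} = 0`, and then
send it to the sum of the monomials obtained by distributing `β_i` over the positions `i`, `i+1`,
`i+2` in all possible ways.
-/

open Finset

theorem sub_mul_sum_antidiagonal_pow_mul_pow {R : Type*} [CommRing R] (x y : R) (a : ℕ) :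
    (x - y) * ∑ pq ∈ antidiagonal a, x ^ pq.1 * y ^ pq.2 = x ^ (a + 1) - y ^ (a + 1) := by
  rw [Nat.sum_antidiagonal_eq_sum_range_succ (fun p q => x ^ p * y ^ q), mul_comm,
    ← geom_sum₂_mul, Nat.add_sub_cancel]

namespace Finset.Nat

variable {M : Type*} [AddCommMonoid M]

theorem sum_antidiagonal_ite_fst_eq_zero (n : ℕ) (g : ℕ × ℕ → M) :
    ∑ st ∈ antidiagonal n, (if st.1 = 0 then g st else 0) = g (0, n) := by
  rw [sum_antidiagonal_eq_sum_range_succ_mk, sum_range_succ']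
  simp

theorem sum_antidiagonal_sum_antidiagonal_fst (n : ℕ) (F : ℕ → ℕ → ℕ → M) :
    ∑ pq ∈ antidiagonal n, ∑ rs ∈ antidiagonal pq.1, F rs.1 rs.2 pq.2 =
      ∑ pq ∈ antidiagonal n, ∑ rs ∈ antidiagonal pq.2, F pq.1 rs.1 rs.2 := by
  rw [sum_sigma', sum_sigma']
  refine sum_nbij' (fun x => ⟨(x.2.1, x.2.2 + x.1.2), (x.2.2, x.1.2)⟩)
    (fun x => ⟨(x.1.1 + x.2.1, x.2.2), (x.1.1, x.2.1)⟩) ?_ ?_ ?_ ?_ ?_ <;>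
    rintro ⟨⟨p, q⟩, r, s⟩ <;>
    simp only [mem_sigma, HasAntidiagonal.mem_antidiagonal, Sigma.mk.injEq, Prod.mk.injEq,
      heq_eq_eq] <;> grind

end Finset.Nat

namespace MvPolynomial

variable {σ R : Type*} [CommRing R]

def hivertSwapExp [DecidableEq σ] (u v : σ) (β : σ →₀ ℕ) : σ →₀ ℕ :=
  if β u = 0 ∨ β v = 0 then β.equivMapDomain (Equiv.swap u v) else β

variable (R) in
noncomputable def hivertSwap [DecidableEq σ] (u v : σ) : MvPolynomial σ R →ₗ[R] MvPolynomial σ R :=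
  (basisMonomials σ R).constr R fun β => monomial (hivertSwapExp u v β) 1

variable (R) in
noncomputable def hivertPi (u v : σ) : MvPolynomial σ R →ₗ[R] MvPolynomial σ R :=
  (basisMonomials σ R).constr R fun β =>
    if β v = 0 then ∑ pq ∈ antidiagonal (β u), monomial ((β.update u pq.1).update v pq.2) 1
    else 0

theorem hivertSwap_monomial_one [DecidableEq σ] (u v : σ) (β : σ →₀ ℕ) :
    hivertSwap R u v (monomial β 1) = monomial (hivertSwapExp u v β) 1 :=
  (basisMonomials σ R).constr_basis R _ β

theorem hivertPi_monomial_one (u v : σ) (β : σ →₀ ℕ) :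
    hivertPi R u v (monomial β 1) =
      if β v = 0 then ∑ pq ∈ antidiagonal (β u), monomial ((β.update u pq.1).update v pq.2) 1
      else 0 :=
  (basisMonomials σ R).constr_basis R _ β

theorem monomial_update_update_one {u v : σ} (huv : u ≠ v) {β : σ →₀ ℕ} (hv : β v = 0)
    (p q : ℕ) :
    monomial ((β.update u p).update v q) (1 : R) =
      X u ^ p * X v ^ q * monomial (β.update u 0) 1 := by
  classical
  have hsplit : (β.update u p).update v q =
      Finsupp.single u p + (Finsupp.single v q + β.update u 0) := by
    ext x
    simp only [Finsupp.update_apply, Finsupp.add_apply, Finsupp.single_apply]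
    split_ifs <;> grind
  rw [hsplit, monomial_single_add, monomial_single_add, mul_assoc]

theorem hivertSwapExp_add_single [DecidableEq σ] {u v : σ} (huv : u ≠ v) {β : σ →₀ ℕ}
    (hv : β v = 0) (m : ℕ) :
    hivertSwapExp u v (β + Finsupp.single u m) = (β.update u 0).update v (β u + m) := by
  rw [hivertSwapExp, if_pos (Or.inr (by simp [huv, hv]))]
  ext x
  simp only [Finsupp.equivMapDomain_apply, Equiv.symm_swap, Equiv.swap_apply_def,
    Finsupp.update_apply, Finsupp.add_apply, Finsupp.single_apply]
  split_ifs <;> grind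

theorem hivertSwapExp_of_ne_zero [DecidableEq σ] {u v : σ} {β : σ →₀ ℕ} (hu : β u ≠ 0)
    (hv : β v ≠ 0) : hivertSwapExp u v β = β :=
  if_neg (by tauto)

theorem X_sub_X_mul_hivertPi [DecidableEq σ] {u v : σ} (huv : u ≠ v) (f : MvPolynomial σ R) :
    (X u - X v) * hivertPi R u v f = X u * f - hivertSwap R u v (X u * f) := by
  suffices LinearMap.mulLeft R (X u - X v) ∘ₗ hivertPi R u v =
      (LinearMap.id - hivertSwap R u v) ∘ₗ LinearMap.mulLeft R (X u) from
    LinearMap.congr_fun this f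
  refine (basisMonomials σ R).ext fun β => ?_
  have hXu : X u * monomial β (1 : R) = monomial (β + Finsupp.single u 1) 1 := by
    rw [X, monomial_mul, one_mul, add_comm]
  simp only [coe_basisMonomials, LinearMap.comp_apply, LinearMap.mulLeft_apply,
    LinearMap.sub_apply, LinearMap.id_apply, hivertPi_monomial_one, hXu,
    hivertSwap_monomial_one]
  by_cases hv : β v = 0
  · have hβ : monomial β (1 : R) = X u ^ β u * monomial (β.update u 0) 1 := by
      have hupd : (β.update u (β u)).update v 0 = β := by
        rw [Finsupp.update_self, ← hv, Finsupp.update_self]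
      simpa only [hupd, pow_zero, mul_one] using monomial_update_update_one (R := R) huv hv (β u) 0
    rw [if_pos hv, hivertSwapExp_add_single huv hv, ← hXu, hβ,
      monomial_update_update_one huv hv]
    simp only [monomial_update_update_one huv hv, ← sum_mul]
    rw [← mul_assoc, sub_mul_sum_antidiagonal_pow_mul_pow]
    ring
  · rw [if_neg hv, hivertSwapExp_of_ne_zero (by simp) (by simpa [huv.symm] using hv)]
    simp

theorem hivertPi_monomial_update_update {u v : σ} (huv : u ≠ v) (γ : σ →₀ ℕ) (p q : ℕ) :
    hivertPi R u v (monomial ((γ.update u p).update v q) 1) =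
      if q = 0 then ∑ pq ∈ antidiagonal p, monomial ((γ.update u pq.1).update v pq.2) 1
      else 0 := by
  classical
  have hcollapse : ∀ p' q', (((γ.update u p).update v q).update u p').update v q' =
      (γ.update u p').update v q' := fun p' q' => by
    rw [Finsupp.update_comm _ huv, Finsupp.update_idem, Finsupp.update_comm _ huv.symm,
      Finsupp.update_idem]
  simp only [hivertPi_monomial_one, hcollapse, Finsupp.update_apply, if_true, if_neg huv]

theorem hivertPi_comm {u v u' v' : σ} (huv : u ≠ v) (hu'v' : u' ≠ v') (huu' : u ≠ u')
    (huv' : u ≠ v') (hvu' : v ≠ u') (hvv' : v ≠ v') (f : MvPolynomial σ R) :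
    hivertPi R u v (hivertPi R u' v' f) = hivertPi R u' v' (hivertPi R u v f) := by
  suffices hivertPi R u v ∘ₗ hivertPi R u' v' = hivertPi R u' v' ∘ₗ hivertPi R u v from
    LinearMap.congr_fun this f
  refine (basisMonomials σ R).ext fun β => ?_
  set F : ℕ → ℕ → ℕ → ℕ → σ →₀ ℕ :=
    fun p q r s => (((β.update u p).update v q).update u' r).update v' s with hF
  have hβ : F (β u) (β v) (β u') (β v') = β := by
    simp only [hF, Finsupp.update_self]
  have hF' : ∀ p q r s, F p q r s = (((β.update u' r).update v' s).update u p).update v q := by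
    classical
    intro p q r s
    ext x
    simp only [hF, Finsupp.update_apply]
    grind
  have hA : ∀ p q r s, hivertPi R u v (monomial (F p q r s) 1) =
      if q = 0 then ∑ pq ∈ antidiagonal p, monomial (F pq.1 pq.2 r s) 1 else 0 := by
    intro p q r s
    simp only [hF', hivertPi_monomial_update_update huv]
  have hB : ∀ p q r s, hivertPi R u' v' (monomial (F p q r s) 1) =
      if s = 0 then ∑ rs ∈ antidiagonal r, monomial (F p q rs.1 rs.2) 1 else 0 :=
    fun p q r s => hivertPi_monomial_update_update hu'v' _ r s
  simp only [coe_basisMonomials, LinearMap.comp_apply]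
  rw [← hβ]
  simp only [hA, hB, apply_ite (hivertPi R _ _), map_sum, map_zero, sum_ite_irrel,
    sum_const_zero]
  rw [sum_comm]
  split_ifs <;> rfl

theorem hivertPi_braid {u v w : σ} (huv : u ≠ v) (hvw : v ≠ w) (huw : u ≠ w)
    (f : MvPolynomial σ R) :
    hivertPi R u v (hivertPi R v w (hivertPi R u v f)) =
      hivertPi R v w (hivertPi R u v (hivertPi R v w f)) := by
  suffices hivertPi R u v ∘ₗ hivertPi R v w ∘ₗ hivertPi R u v =
      hivertPi R v w ∘ₗ hivertPi R u v ∘ₗ hivertPi R v w from LinearMap.congr_fun this f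
  refine (basisMonomials σ R).ext fun β => ?_
  set F : ℕ → ℕ → ℕ → σ →₀ ℕ := fun p q r => ((β.update u p).update v q).update w r with hF
  have hβ : F (β u) (β v) (β w) = β := by
    simp only [hF, Finsupp.update_self]
  have hA : ∀ p q r, hivertPi R u v (monomial (F p q r) 1) =
      if q = 0 then ∑ pq ∈ antidiagonal p, monomial (F pq.1 pq.2 r) 1 else 0 := by
    have hF' : ∀ p q r, F p q r = ((β.update w r).update u p).update v q := by
      classical
      intro p q r
      ext x
      simp only [hF, Finsupp.update_apply]
      grind
    intro p q r
    simp only [hF', hivertPi_monomial_update_update huv]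
  have hB : ∀ p q r, hivertPi R v w (monomial (F p q r) 1) =
      if r = 0 then ∑ st ∈ antidiagonal q, monomial (F p st.1 st.2) 1 else 0 :=
    fun p q r => hivertPi_monomial_update_update hvw _ q r
  simp only [coe_basisMonomials, LinearMap.comp_apply]
  rw [← hβ]
  simp only [hA, hB, apply_ite (hivertPi R _ _), map_sum, map_zero,
    Nat.sum_antidiagonal_ite_fst_eq_zero, sum_ite_irrel, sum_const_zero]
  rw [Nat.sum_antidiagonal_sum_antidiagonal_fst (β u) fun p q r => monomial (F p q r) (1 : R)]
  split_ifs <;> rfl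

end MvPolynomial

open MvPolynomial

theorem stilde_eq_hivertSwap (n i : ℕ) (hi : i + 1 < n) (f : MvPolynomial (Fin n) ℂ) :
    stilde n i hi f = hivertSwap ℂ ⟨i, by omega⟩ ⟨i + 1, hi⟩ f := by
  rw [hivertSwap, Module.Basis.constr_apply]
  simp only [smul_monomial, smul_eq_mul, mul_one]
  rfl

theorem PRel.eq_hivertPi {n i : ℕ} {hi : i + 1 < n} {f g : MvPolynomial (Fin n) ℂ}
    (h : PRel n i hi f g) : g = hivertPi ℂ ⟨i, by omega⟩ ⟨i + 1, hi⟩ f := by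
  have huv : (⟨i, by omega⟩ : Fin n) ≠ ⟨i + 1, hi⟩ := by simp
  refine mul_left_cancel₀ (sub_ne_zero.mpr (X_injective.ne huv)) ?_
  rw [h, X_sub_X_mul_hivertPi huv, stilde_eq_hivertSwap]

/-- Hivert's operators `π̃ᵢ` satisfy the braid relations
`π̃ᵢ π̃ᵢ₊₁ π̃ᵢ = π̃ᵢ₊₁ π̃ᵢ π̃ᵢ₊₁` and the commutation relations
`π̃ᵢ π̃ⱼ = π̃ⱼ π̃ᵢ` for `|i − j| > 1`. -/
theorem ptilde_braid_and_commute (n : ℕ) :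
    (∀ (i : ℕ) (hi : i + 2 < n) (f a b c a' b' c' : MvPolynomial (Fin n) ℂ),
      PRel n i (by omega) f a → PRel n (i + 1) hi a b → PRel n i (by omega) b c →
      PRel n (i + 1) hi f a' → PRel n i (by omega) a' b' → PRel n (i + 1) hi b' c' →
      c = c') ∧
    (∀ (i j : ℕ) (hi : i + 1 < n) (hj : j + 1 < n), (i + 1 < j ∨ j + 1 < i) →
      ∀ f a b a' b' : MvPolynomial (Fin n) ℂ,
      PRel n i hi f a → PRel n j hj a b →
      PRel n j hj f a' → PRel n i hi a' b' →
      b = b') := by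
  have hne : ∀ {k l : ℕ} (hk : k < n) (hl : l < n), k ≠ l → (⟨k, hk⟩ : Fin n) ≠ ⟨l, hl⟩ :=
    fun _ _ h => Fin.ne_of_val_ne h
  constructor
  · intro i hi f a b c a' b' c' ha hb hc ha' hb' hc'
    rw [hc.eq_hivertPi, hb.eq_hivertPi, ha.eq_hivertPi, hc'.eq_hivertPi, hb'.eq_hivertPi,
      ha'.eq_hivertPi]
    exact hivertPi_braid (hne _ _ (by omega)) (hne _ _ (by omega)) (hne _ _ (by omega)) f
  · intro i j hi hj hij f a b a' b' ha hb ha' hb'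
    rw [hb.eq_hivertPi, ha.eq_hivertPi, hb'.eq_hivertPi, ha'.eq_hivertPi]
    exact hivertPi_comm (hne _ _ (by omega)) (hne _ _ (by omega)) (hne _ _ (by omega))
      (hne _ _ (by omega)) (hne _ _ (by omega)) (hne _ _ (by omega)) f
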